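/- arXiv:1809.09932 — 4 statements merged into one kernel-verified Lean document; each statement's English description precedes it below -/
import Mathlib

section
/- Let n ≥ 2 be a natural number. If α, β, γ, δ are natural numbers with α ≤ n − 2, β ≤ n − 2, and α + βn + γ(n² − n) + δ(n² − 1) = 3n² − 2n − 2, then (α, β, γ, δ) equals (0, n−2, 0, 2) or (n−2, 0, 3, 0). -/
/-!
Since `n ≡ 1` modulo `n - 1`, the weights `n² - n` and `n² - 1` vanish there and the equation
reads `α + β ≡ n - 2 (mod n - 1)`; the bounds on `α` and `β` force `α + β = n - 2`.
Eliminating `β` and dividing by `n - 1` leaves `γ n + δ (n + 1) = 2 (n + 1) + α` with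
`α ≤ n - 2`, which has only the two solutions `δ = 2, γ = α = 0` and `δ = 0, γ = 3, α = n - 2`.
-/

lemma Int.eq_zero_and_eq_zero_of_add_mul_eq_zero {m x y : ℤ} (h : x + m * y = 0)
    (hx : |x| < m) : x = 0 ∧ y = 0 := by
  have hx0 : x = 0 :=
    Int.eq_zero_of_abs_lt_dvd ⟨-y, by linear_combination h⟩ hx
  have hm : m ≠ 0 := ((abs_nonneg x).trans_lt hx).ne'
  subst hx0
  exact ⟨rfl, by simpa [hm] using h⟩

lemma fiber_reduction_mod_pred {n α β γ δ : ℕ} (hn : 2 ≤ n)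
    (hα : α ≤ n - 2) (hβ : β ≤ n - 2)
    (h : α + β * n + γ * (n ^ 2 - n) + δ * (n ^ 2 - 1) = 3 * n ^ 2 - 2 * n - 2) :
    α + β + 2 = n ∧ γ * n + δ * (n + 1) = 2 * (n + 1) + α := by
  have hnn : n ≤ n ^ 2 := Nat.le_self_pow two_ne_zero n
  have hrhs : 2 * n + 2 ≤ 3 * n ^ 2 := by nlinarith
  have hZ : (α : ℤ) + β * n + γ * (n ^ 2 - n) + δ * (n ^ 2 - 1) = 3 * n ^ 2 - 2 * n - 2 := by
    have := congrArg (Nat.cast : ℕ → ℤ) h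
    push_cast [Nat.sub_sub, Nat.cast_sub hnn, Nat.cast_sub (by omega : 1 ≤ n ^ 2),
      Nat.cast_sub hrhs] at this
    linear_combination this
  obtain ⟨hsum, hquot⟩ := Int.eq_zero_and_eq_zero_of_add_mul_eq_zero
    (m := n - 1) (x := α + β + 2 - n) (y := β + γ * n + δ * (n + 1) - 3 * n)
    (by linear_combination hZ) (by rw [abs_lt]; omega)
  constructor
  · omega
  · have : (γ : ℤ) * n + δ * (n + 1) = 2 * (n + 1) + α := by linear_combination hquot - hsum
    exact_mod_cast this

lemma solutions_of_mul_add_mul_succ_eq {n α γ δ : ℕ} (hα : α + 2 ≤ n)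
    (h : γ * n + δ * (n + 1) = 2 * (n + 1) + α) :
    (α, γ, δ) = (0, 0, 2) ∨ (α, γ, δ) = (n - 2, 3, 0) := by
  have hδ : δ ≤ 2 := by
    by_contra! hδ
    nlinarith
  have hγ : γ ≤ 3 := by
    by_contra! hγ
    nlinarith
  simp only [Prod.mk.injEq]
  interval_cases δ <;> interval_cases γ <;> omega

theorem stmt_2 (n α β γ δ : ℕ) (hn : 2 ≤ n)
    (hα : α ≤ n - 2) (hβ : β ≤ n - 2)
    (h : α + β * n + γ * (n ^ 2 - n) + δ * (n ^ 2 - 1) = 3 * n ^ 2 - 2 * n - 2) :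
    (α, β, γ, δ) = (0, n - 2, 0, 2) ∨ (α, β, γ, δ) = (n - 2, 0, 3, 0) := by
  obtain ⟨hsum, hquot⟩ := fiber_reduction_mod_pred hn hα hβ h
  rcases solutions_of_mul_add_mul_succ_eq (by omega) hquot with hsol | hsol <;>
    simp only [Prod.mk.injEq] at hsol ⊢ <;> omega
end

section
/- Let n ≥ 2 and L = { (x₁,x₂,x₃,x₄) ∈ ℤ⁴ : x₁ + n·x₂ + (n²−n)·x₃ + (n²−1)·x₄ = 0 }. Suppose u = (2−n, n−2, −3, 2) is written as a semiconformal decomposition u = v +_sc w with v, w ∈ L, where the first coordinates of both v and w are ≤ 0 and the second coordinates of both v and w are ≥ 0. Then v = 0 or w = 0. -/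
/-!
The defining form of `L` is `x₀ + n x₁ + (n - 1) k(x)` with `k(x) = n (x₂ + x₃) + x₃`
(`tailForm`). If `x₀ ≥ 2 - n` and `x₁ ≥ 0` then `x₀ + n x₁ > -(n - 1)`, which forces `k(x) ≤ 0`.
Since `k(v) + k(w) = k(u) = 2 - n`, this pins `2 - n ≤ k(v) ≤ 0`. Semiconformality at the last
two coordinates gives `v₂ ≤ 0` and `v₃ ≤ 2`, and then `k(v) = n (v₂ + v₃) + v₃` leaves only
`(v₂, v₃) = (0, 0)` or `(-3, 2)`, i.e. the tail of `v` or of `w` vanishes. A vector of `L` with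
zero tail has `x₀ = -n x₁`, so the bounds on `x₀, x₁` make it zero.
-/

namespace KernelLattice

def latticeForm (n : ℤ) (x : Fin 4 → ℤ) : ℤ :=
  x 0 + n * x 1 + (n ^ 2 - n) * x 2 + (n ^ 2 - 1) * x 3

def tailForm (n : ℤ) (x : Fin 4 → ℤ) : ℤ := n * (x 2 + x 3) + x 3

lemma latticeForm_eq (n : ℤ) (x : Fin 4 → ℤ) :
    latticeForm n x = x 0 + n * x 1 + (n - 1) * tailForm n x := by
  unfold latticeForm tailForm; ring

variable {n : ℤ} {x : Fin 4 → ℤ}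

lemma tailForm_nonpos (hn : 2 ≤ n) (hx : latticeForm n x = 0) (h0 : 2 - n ≤ x 0)
    (h1 : 0 ≤ x 1) : tailForm n x ≤ 0 := by
  rw [latticeForm_eq] at hx
  by_contra! hk
  nlinarith [mul_le_mul_of_nonneg_left (show 1 ≤ tailForm n x from hk)
    (show 0 ≤ n - 1 by linarith)]

lemma eq_zero_of_latticeForm_eq_zero (hn : 2 ≤ n) (hx : latticeForm n x = 0)
    (h0 : 2 - n ≤ x 0) (h1 : 0 ≤ x 1) (h2 : x 2 = 0) (h3 : x 3 = 0) : x = 0 := by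
  simp only [latticeForm, h2, h3, mul_zero, add_zero] at hx
  have hx1 : x 1 = 0 := by
    by_contra! hne
    nlinarith [mul_le_mul_of_nonneg_left (show 1 ≤ x 1 by omega) (show 0 ≤ n by linarith)]
  have hx0 : x 0 = 0 := by simpa [hx1] using hx
  ext i
  fin_cases i <;> simp [hx0, hx1, h2, h3]

lemma tail_cases {t d : ℤ} (hn : 2 ≤ n) (hlo : 2 - n ≤ n * t + d) (hhi : n * t + d ≤ 0)
    (hd : d ≤ 2) (htd : t ≤ d) : (t = 0 ∧ d = 0) ∨ (t = -1 ∧ d = 2) := by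
  have ht_le : t ≤ 0 := by
    by_contra! ht
    nlinarith [mul_le_mul_of_nonneg_left (show 1 ≤ t by omega) (show 0 ≤ n by linarith)]
  have ht_ge : -1 ≤ t := by
    by_contra! ht
    nlinarith [mul_le_mul_of_nonneg_left (show t ≤ -2 by omega) (show 0 ≤ n by linarith)]
  interval_cases t <;> omega

end KernelLattice

open KernelLattice in
theorem stmt_9 (n : ℕ) (hn : 2 ≤ n) (v w : Fin 4 → ℤ)
    (hv : v 0 + n * v 1 + ((n : ℤ) ^ 2 - n) * v 2 + ((n : ℤ) ^ 2 - 1) * v 3 = 0)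
    (hw : w 0 + n * w 1 + ((n : ℤ) ^ 2 - n) * w 2 + ((n : ℤ) ^ 2 - 1) * w 3 = 0)
    (hsum : (![2 - (n : ℤ), (n : ℤ) - 2, -3, 2] : Fin 4 → ℤ) = v + w)
    (hsc : ∀ i, (0 < v i → 0 ≤ w i) ∧ (w i < 0 → v i ≤ 0))
    (hv1 : v 0 ≤ 0) (hw1 : w 0 ≤ 0) (hv2 : 0 ≤ v 1) (hw2 : 0 ≤ w 1) :
    v = 0 ∨ w = 0 := by
  have hn' : (2 : ℤ) ≤ n := by exact_mod_cast hn
  have e0 := congrFun hsum 0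
  have e2 := congrFun hsum 2
  have e3 := congrFun hsum 3
  simp only [Pi.add_apply, Matrix.cons_val] at e0 e2 e3
  have hv2_nonpos : v 2 ≤ 0 := not_lt.1 fun h => by linarith [(hsc 2).1 h]
  have hv3_le : v 3 ≤ 2 := not_lt.1 fun h => by linarith [(hsc 3).1 (by linarith)]
  have hkv := tailForm_nonpos hn' hv (by linarith) hv2
  have hkw := tailForm_nonpos hn' hw (by linarith) hw2
  have hk_sum : tailForm n v + tailForm n w = 2 - n := by
    unfold tailForm; linear_combination (-n) * e2 - (n + 1) * e3
  have hkv_ge : 2 - (n : ℤ) ≤ tailForm n v := by linarith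
  rcases tail_cases (t := v 2 + v 3) hn' hkv_ge hkv hv3_le (by linarith) with ⟨ht, hd⟩ | ⟨ht, hd⟩
  · exact .inl (eq_zero_of_latticeForm_eq_zero hn' hv (by linarith) hv2 (by linarith) hd)
  · exact .inr (eq_zero_of_latticeForm_eq_zero hn' hw (by linarith) hw2 (by linarith)
      (by linarith))
end

section
/- Let n ≥ 2 and L = { x ∈ ℤ⁴ : x₁ + n·x₂ + (n²−n)·x₃ + (n²−1)·x₄ = 0 }. Consider the n × 4 integer matrix u whose first n−2 rows are (1,−1,−1,1), whose (n−1)-st row is (0,0,n+1,−n), and whose n-th row is (2−n, n−2, −3, 2). Suppose u = v + w where v, w are n × 4 integer matrices each of whose rows lies in L, each of whose columns sums to zero, and such that for every entry (i,j): v(i,j) > 0 implies w(i,j) ≥ 0 and w(i,j) < 0 implies v(i,j) ≤ 0. Then v = 0 or w = 0. -/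
/-!
Write the summand `v` as the matrix with rows `x` (the first `n - 2`), `p` and `q`.
Semiconformality bounds `v` entrywise by `u⁺`. Reducing the relation
`a + n b + (n² - n) c + (n² - 1) d = 0` of a row modulo `n` gives `a ≡ d`, so a top row is
either `0` or has `d = 1` and `a ∈ {1} ∪ (-∞, 1 - n]`; column `0` excludes the second option,
and then column `1` (whose entries in `p` and `q` are at most `n - 2`) forces every top row to
be `d • (1, -1, -1, 1)` with `d ∈ {0, 1}`. The rows `p` and `q` then sum to
`-T • (1, -1, -1, 1)`, `T` the number of top rows with `d = 1`, and `q 3 - q 0` is a multiple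
of `n` in `[0, n]`; its two possible values give `v = 0` (with `T = 0`) and `v = u` (with
`T = n - 2`).
-/

open Finset

def kerA (N : ℤ) : Set (Fin 4 → ℤ) :=
  {x | x 0 + N * x 1 + (N ^ 2 - N) * x 2 + (N ^ 2 - 1) * x 3 = 0}

def typeElement (n : ℕ) : Fin n → Fin 4 → ℤ := fun i =>
  if (i : ℕ) < n - 2 then ![1, -1, -1, 1]
  else if (i : ℕ) = n - 2 then ![0, 0, (n : ℤ) + 1, -(n : ℤ)]
  else ![2 - (n : ℤ), (n : ℤ) - 2, -3, 2]

theorem le_posPart_add_of_neg_imp_nonpos {α : Type*} [AddCommGroup α] [LinearOrder α]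
    [IsOrderedAddMonoid α] {x z : α} (h : z < 0 → x ≤ 0) : x ≤ (x + z)⁺ := by
  rcases lt_or_ge z 0 with hz | hz
  · exact (h hz).trans (posPart_nonneg _)
  · exact (le_add_of_nonneg_right hz).trans (le_posPart _)

theorem Fin.funext_add_two {α : Type*} {m : ℕ} {f g : Fin (m + 2) → α}
    (h : ∀ i : Fin m, f i.castSucc.castSucc = g i.castSucc.castSucc)
    (hp : f (Fin.last m).castSucc = g (Fin.last m).castSucc)
    (hq : f (Fin.last (m + 1)) = g (Fin.last (m + 1))) : f = g :=
  funext <| Fin.lastCases hq (Fin.lastCases hp h)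

section Rows

variable {N : ℤ} {x : Fin 4 → ℤ}

theorem top_row_eq_zero_or (hN : 2 ≤ N) (hx : x ∈ kerA N) (hle : x ≤ ![1, 0, 0, 1]) :
    x = 0 ∨ x 3 = 1 ∧ (x 0 = 1 ∨ x 0 ≤ 1 - N) := by
  have hx' : x 0 + N * x 1 + (N ^ 2 - N) * x 2 + (N ^ 2 - 1) * x 3 = 0 := hx
  have h0 : x 0 ≤ 1 := hle 0
  have h1 : x 1 ≤ 0 := hle 1
  have h2 : x 2 ≤ 0 := hle 2
  have h3 : x 3 ≤ 1 := hle 3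
  rcases (show x 3 = 1 ∨ x 3 ≤ 0 by omega) with hd | hd
  · have hdvd : N ∣ 1 - x 0 :=
      ⟨x 1 + (N - 1) * x 2 + N, by linear_combination -hx' + (N ^ 2 - 1) * hd⟩
    rcases (show 1 - x 0 = 0 ∨ 0 < 1 - x 0 by omega) with h | h
    · exact Or.inr ⟨hd, Or.inl (by omega)⟩
    · exact Or.inr ⟨hd, Or.inr (by linarith [Int.le_of_dvd h hdvd])⟩
  · -- `x 0 = N (-x 1) + (N² - N) (-x 2) + (N² - 1) (-x 3) ≥ N (-x 1 - x 2 - x 3)`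
    have hs : N * (-x 1 - x 2 - x 3) ≤ 1 := by
      nlinarith [mul_nonneg (by nlinarith : (0 : ℤ) ≤ N ^ 2 - 2 * N) (by omega : 0 ≤ -x 2),
        mul_nonneg (by nlinarith : (0 : ℤ) ≤ N ^ 2 - N - 1) (by omega : 0 ≤ -x 3)]
    have hs0 : -x 1 - x 2 - x 3 = 0 := by
      by_contra h
      nlinarith [mul_le_mul_of_nonneg_left (by omega : (1 : ℤ) ≤ -x 1 - x 2 - x 3)
        (by omega : 0 ≤ N)]
    have ha : x 0 = 0 := by nlinarith
    left
    ext j; fin_cases j <;> simp <;> omega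

theorem top_row_of_zero_eq_three (hN : 3 ≤ N) (hx : x ∈ kerA N) (hle : x ≤ ![1, 0, 0, 1])
    (ha : x 0 = x 3) : x 1 = -x 3 - (N - 1) * (x 2 + x 3) ∧ 0 ≤ x 2 + x 3 := by
  have h1 : x 1 ≤ 0 := hle 1
  have h3 : x 3 ≤ 1 := hle 3
  have hb : x 1 = -x 3 - (N - 1) * (x 2 + x 3) := by
    have : N * (x 1 + x 3 + (N - 1) * (x 2 + x 3)) = 0 := by
      rw [kerA, Set.mem_ofPred_eq, ha] at hx; linear_combination hx
    linarith [(mul_eq_zero.1 this).resolve_left (by omega)]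
  refine ⟨hb, ?_⟩
  by_contra! h
  nlinarith [mul_le_mul_of_nonneg_left (by omega : x 2 + x 3 ≤ -1)
    (by omega : (0 : ℤ) ≤ N - 1)]

theorem bottom_rows_cases (hN : 2 ≤ N) {p q : Fin 4 → ℤ} {T : ℤ} (hq : q ∈ kerA N)
    (hple : p ≤ ![0, 0, N + 1, 0]) (hqle : q ≤ ![0, N - 2, 0, 2])
    (hsum : T • ![1, -1, -1, 1] + p + q = 0) (hT : T ≤ N - 2) :
    T = 0 ∧ p = 0 ∧ q = 0 ∨
      T = N - 2 ∧ p = ![0, 0, N + 1, -N] ∧ q = ![2 - N, N - 2, -3, 2] := by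
  have hq' : q 0 + N * q 1 + (N ^ 2 - N) * q 2 + (N ^ 2 - 1) * q 3 = 0 := hq
  have hp0 : p 0 ≤ 0 := hple 0
  have hp1 : p 1 ≤ 0 := hple 1
  have hq0 : q 0 ≤ 0 := hqle 0
  have hq1 : q 1 ≤ N - 2 := hqle 1
  have hq2 : q 2 ≤ 0 := hqle 2
  have hq3 : q 3 ≤ 2 := hqle 3
  have hs0 : T * 1 + p 0 + q 0 = 0 := congrFun hsum 0
  have hs1 : T * -1 + p 1 + q 1 = 0 := congrFun hsum 1
  have hs2 : T * -1 + p 2 + q 2 = 0 := congrFun hsum 2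
  have hs3 : T * 1 + p 3 + q 3 = 0 := congrFun hsum 3
  have hq3_nonneg : 0 ≤ q 3 := by
    by_contra! h
    nlinarith [mul_le_mul_of_nonneg_left hq1 (by omega : (0 : ℤ) ≤ N),
      mul_nonpos_of_nonneg_of_nonpos (by nlinarith : (0 : ℤ) ≤ N ^ 2 - N) hq2,
      mul_le_mul_of_nonneg_left (by omega : q 3 ≤ -1) (by nlinarith : (0 : ℤ) ≤ N ^ 2 - 1)]
  -- `q 3 - q 0` is a multiple of `N`, and `0 ≤ q 3 - q 0 ≤ 2 + T ≤ N`
  have hdvd : N ∣ q 3 - q 0 := ⟨q 1 + (N - 1) * q 2 + N * q 3, by linear_combination -hq'⟩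
  rcases (show q 3 - q 0 = 0 ∨ 0 < q 3 - q 0 by omega) with h | h
  · have hq3 : q 3 = 0 := by omega
    have hq0 : q 0 = 0 := by omega
    have hq12 : q 1 + (N - 1) * q 2 = 0 :=
      (mul_eq_zero.1 (by linear_combination hq' - hq0 - (N ^ 2 - 1) * hq3)).resolve_left
        (by omega : N ≠ 0)
    have hq2 : q 2 = 0 := by nlinarith
    have hq1 : q 1 = 0 := by nlinarith
    have hT : T = 0 := by omega
    left
    refine ⟨hT, ?_, ?_⟩ <;> ext j <;> fin_cases j <;> simp <;> linarith
  · have hN_le := Int.le_of_dvd h hdvd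
    have hq3 : q 3 = 2 := by omega
    have hq0 : q 0 = 2 - N := by omega
    have hT : T = N - 2 := by omega
    have hq1 : q 1 = N - 2 := by omega
    have hq2 : q 2 + 3 = 0 :=
      (mul_eq_zero.1 (by linear_combination hq' - hq0 - N * hq1 - (N ^ 2 - 1) * hq3)).resolve_left
        (by nlinarith : N ^ 2 - N ≠ 0)
    right
    refine ⟨hT, ?_, ?_⟩ <;> ext j <;> fin_cases j <;> simp <;> linarith

end Rows

theorem top_block_eq_smul {m : ℕ} {N : ℤ} (hN : N = m + 2) {x : Fin m → Fin 4 → ℤ}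
    (hL : ∀ i, x i ∈ kerA N) (hle : ∀ i, x i ≤ ![1, 0, 0, 1])
    (hcol0 : 0 ≤ ∑ i, x i 0) (hcol1 : -m ≤ ∑ i, x i 1) :
    ∀ i, (x i 3 = 0 ∨ x i 3 = 1) ∧ x i = x i 3 • ![1, -1, -1, 1] := by
  have hcases i := top_row_eq_zero_or (by omega) (hL i) (hle i)
  have hd i : x i 3 = 0 ∨ x i 3 = 1 := by
    rcases hcases i with h | h
    · simp [h]
    · exact Or.inr h.1
  have ha i : x i 0 = x i 3 := by
    by_contra hne
    have hi : x i 0 ≤ 1 - N := by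
      rcases hcases i with h | ⟨h3, h | h⟩
      · simp [h] at hne
      · exact absurd (h.trans h3.symm) hne
      · exact h
    have := single_le_sum (fun j _ => by simpa using hle j 0 : ∀ j ∈ univ, 0 ≤ 1 - x j 0)
      (mem_univ i)
    simp only [sum_sub_distrib, sum_const, card_univ, Fintype.card_fin, nsmul_eq_mul,
      mul_one] at this
    omega
  have hrow i := top_row_of_zero_eq_three (by have := i.pos; omega) (hL i) (hle i) (ha i)
  have hS : ∑ i, (x i 2 + x i 3) = 0 := by
    have hb : ∑ i, x i 1 = -∑ i, x i 3 - (N - 1) * ∑ i, (x i 2 + x i 3) := by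
      rw [mul_sum, ← sum_neg_distrib, ← sum_sub_distrib]
      exact sum_congr rfl fun i _ => (hrow i).1
    have hT : 0 ≤ ∑ i, x i 3 := sum_nonneg fun i _ => by rcases hd i with h | h <;> omega
    have hS_nonneg : 0 ≤ ∑ i, (x i 2 + x i 3) := sum_nonneg fun i _ => (hrow i).2
    nlinarith
  intro i
  have hc := (sum_eq_zero_iff_of_nonneg fun i _ => (hrow i).2).1 hS i (mem_univ i)
  have hb := (hrow i).1
  rw [hc, mul_zero, sub_zero] at hb
  refine ⟨hd i, ?_⟩
  ext j; fin_cases j <;> simp [ha i, hb]; linarith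

theorem block_cases {m : ℕ} {N : ℤ} (hN : N = m + 2) {x : Fin m → Fin 4 → ℤ}
    {p q : Fin 4 → ℤ} (hx : ∀ i, x i ∈ kerA N) (hq : q ∈ kerA N)
    (hx_le : ∀ i, x i ≤ ![1, 0, 0, 1]) (hp_le : p ≤ ![0, 0, N + 1, 0])
    (hq_le : q ≤ ![0, N - 2, 0, 2]) (hsum : ∑ i, x i + p + q = 0) :
    x = 0 ∧ p = 0 ∧ q = 0 ∨
      x = (fun _ => ![1, -1, -1, 1]) ∧ p = ![0, 0, N + 1, -N] ∧ q = ![2 - N, N - 2, -3, 2] := by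
  have hcol0 : ∑ i, x i 0 + p 0 + q 0 = 0 := by simpa using congrFun hsum 0
  have hcol1 : ∑ i, x i 1 + p 1 + q 1 = 0 := by simpa using congrFun hsum 1
  have hp0 : p 0 ≤ 0 := hp_le 0
  have hq0 : q 0 ≤ 0 := hq_le 0
  have hp1 : p 1 ≤ 0 := hp_le 1
  have hq1 : q 1 ≤ N - 2 := hq_le 1
  have htop := top_block_eq_smul hN hx hx_le (by linarith) (by linarith)
  have hd i : 0 ≤ x i 3 ∧ x i 3 ≤ 1 := by rcases (htop i).1 with h | h <;> omega
  have hT : ∑ i, x i = (∑ i, x i 3) • ![1, -1, -1, 1] := by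
    rw [sum_smul]; exact sum_congr rfl fun i _ => (htop i).2
  have hTm : ∑ i, x i 3 ≤ m := by
    simpa using sum_le_card_nsmul univ (fun i => x i 3) 1 fun i _ => (hd i).2
  rcases bottom_rows_cases (by omega) hq hp_le hq_le (hT ▸ hsum) (by omega) with
    ⟨hT0, hp, hq⟩ | ⟨hTm, hp, hq⟩
  · have h0 := (sum_eq_zero_iff_of_nonneg fun i _ => (hd i).1).1 hT0
    refine Or.inl ⟨funext fun i => ?_, hp, hq⟩
    rw [(htop i).2, h0 i (mem_univ i), zero_smul, Pi.zero_apply]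
  · have h1 := (sum_eq_sum_iff_of_le (s := univ) (g := fun _ => (1 : ℤ)) fun i _ => (hd i).2).1
      (by simp only [sum_const, card_univ, Fintype.card_fin, nsmul_eq_mul, mul_one]; omega)
    refine Or.inr ⟨funext fun i => ?_, hp, hq⟩
    rw [(htop i).2, h1 i (mem_univ i), one_smul]

theorem eq_zero_or_eq_typeElement {n : ℕ} (hn : 2 ≤ n) {v : Fin n → Fin 4 → ℤ}
    (hL : ∀ i, v i ∈ kerA n) (hle : v ≤ (typeElement n)⁺) (hcol : ∑ i, v i = 0) :
    v = 0 ∨ v = typeElement n := by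
  obtain ⟨m, rfl⟩ : ∃ m, n = m + 2 := ⟨n - 2, by omega⟩
  have hU_top (i : Fin m) : typeElement (m + 2) i.castSucc.castSucc = ![1, -1, -1, 1] :=
    if_pos (by simp)
  have hU_p : typeElement (m + 2) (Fin.last m).castSucc =
      ![0, 0, ((m + 2 : ℕ) : ℤ) + 1, -((m + 2 : ℕ) : ℤ)] :=
    (if_neg (by simp)).trans (if_pos (by simp))
  have hU_q : typeElement (m + 2) (Fin.last (m + 1)) =
      ![2 - ((m + 2 : ℕ) : ℤ), ((m + 2 : ℕ) : ℤ) - 2, -3, 2] :=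
    (if_neg (by simp)).trans (if_neg (by simp))
  have hN : ((m + 2 : ℕ) : ℤ) = m + 2 := by push_cast; ring
  generalize ((m + 2 : ℕ) : ℤ) = N at *
  have hx_le (i : Fin m) : v i.castSucc.castSucc ≤ ![1, 0, 0, 1] := by
    refine (hle _).trans_eq ?_
    ext j; fin_cases j <;> simp [hU_top]
  have hp_le : v (Fin.last m).castSucc ≤ ![0, 0, N + 1, 0] := by
    refine (hle _).trans_eq ?_
    ext j; fin_cases j <;> simp [hU_p, posPart_eq_self, negPart_eq_zero] <;> omega
  have hq_le : v (Fin.last (m + 1)) ≤ ![0, N - 2, 0, 2] := by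
    refine (hle _).trans_eq ?_
    ext j; fin_cases j <;> simp [hU_q, posPart_eq_self, posPart_eq_zero] <;> omega
  rcases block_cases hN (fun i => hL _) (hL _) hx_le hp_le hq_le
    (by simpa [Fin.sum_univ_castSucc] using hcol) with ⟨hx, hp, hq⟩ | ⟨hx, hp, hq⟩
  · exact Or.inl (Fin.funext_add_two (fun i => congrFun hx i) hp hq)
  · exact Or.inr (Fin.funext_add_two (fun i => (congrFun hx i).trans (hU_top i).symm)
      (hp.trans hU_p.symm) (hq.trans hU_q.symm))

theorem stmt_11_general (n : ℕ) (hn : 2 ≤ n)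
    (L : Set (Fin 4 → ℤ))
    (hL : L = {x | x 0 + n * x 1 + ((n : ℤ) ^ 2 - n) * x 2 + ((n : ℤ) ^ 2 - 1) * x 3 = 0})
    (u v w : Fin n → Fin 4 → ℤ)
    (hu : ∀ i : Fin n,
      (((i : ℕ) < n - 2) → u i = ![1, -1, -1, 1]) ∧
      ((i : ℕ) = n - 2 → u i = ![0, 0, (n : ℤ) + 1, -(n : ℤ)]) ∧
      ((i : ℕ) = n - 1 → u i = ![2 - (n : ℤ), (n : ℤ) - 2, -3, 2]))
    (hvL : ∀ i, v i ∈ L)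
    (hvcol : ∀ j, ∑ i, v i j = 0)
    (hsum : u = v + w)
    (hsc : ∀ i j, (0 < v i j → 0 ≤ w i j) ∧ (w i j < 0 → v i j ≤ 0)) :
    v = 0 ∨ w = 0 := by
  subst hL
  have hU : u = typeElement n := funext fun i => by
    unfold typeElement
    split_ifs with h₁ h₂
    · exact (hu i).1 h₁
    · exact (hu i).2.1 h₂
    · exact (hu i).2.2 (by omega)
  have hle : v ≤ (typeElement n)⁺ := fun i j => by
    rw [← hU, Pi.posPart_apply, Pi.posPart_apply, hsum]
    exact le_posPart_add_of_neg_imp_nonpos (hsc i j).2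
  have hcol : ∑ i, v i = 0 := funext fun j => by simpa using hvcol j
  rcases eq_zero_or_eq_typeElement hn hvL hle hcol with h | h
  · exact Or.inl h
  · rw [← hU] at h
    rw [h] at hsum
    exact Or.inr (by simpa using hsum)

theorem stmt_11 (n : ℕ) (hn : 2 ≤ n)
    (L : Set (Fin 4 → ℤ))
    (hL : L = {x | x 0 + n * x 1 + ((n : ℤ) ^ 2 - n) * x 2 + ((n : ℤ) ^ 2 - 1) * x 3 = 0})
    (u v w : Fin n → Fin 4 → ℤ)
    (hu : ∀ i : Fin n,
      (((i : ℕ) < n - 2) → u i = ![1, -1, -1, 1]) ∧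
      ((i : ℕ) = n - 2 → u i = ![0, 0, (n : ℤ) + 1, -(n : ℤ)]) ∧
      ((i : ℕ) = n - 1 → u i = ![2 - (n : ℤ), (n : ℤ) - 2, -3, 2]))
    (hvL : ∀ i, v i ∈ L) (hwL : ∀ i, w i ∈ L)
    (hvcol : ∀ j, ∑ i, v i j = 0) (hwcol : ∀ j, ∑ i, w i j = 0)
    (hsum : u = v + w)
    (hsc : ∀ i j, (0 < v i j → 0 ≤ w i j) ∧ (w i j < 0 → v i j ≤ 0)) :
    v = 0 ∨ w = 0 :=
  stmt_11_general n hn L hL u v w hu hvL hvcol hsum hsc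
end

section
/- Let n ≥ 2. There is no decomposition (1,−1,−1,1) = v + w with v, w ∈ ker of x ↦ x₁ + n·x₂ + (n²−n)·x₃ + (n²−1)·x₄, both v and w nonzero, satisfying (1,−1,−1,1)⁺ = v⁺ + w⁺ and (1,−1,−1,1)⁻ = v⁻ + w⁻. That is, (1,−1,−1,1) belongs to the Graver basis of A = (1, n, n²−n, n²−1). -/
/-! A conformal summand `v` of a vector `u` with entries in `{-1, 0, 1}` agrees with `u` on some
set `S` of coordinates and vanishes off `S`. For `u = (1, -1, -1, 1)`, `A v = 0` says that the
weighted entries `(1, -n, n - n², n² - 1)` sum to zero over `S`; since they sum to zero over all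
four coordinates, it suffices to look at the sets containing the first one, whose sums
`1, 1 - n, 1 + n - n², n², 1 - n², n² - n, n` are all nonzero for `n ≥ 2`. -/

lemma eq_zero_or_eq_of_conformal {a b c : ℤ} (ha : |a| ≤ 1) (hsum : a = b + c)
    (hneg : max (-a) 0 = max (-b) 0 + max (-c) 0) :
    b = 0 ∨ b = a := by
  rw [abs_le] at ha
  omega

lemma eq_zero_or_eq_of_mem_kernel {n : ℤ} (hn : 2 ≤ n) {v : Fin 4 → ℤ}
    (hv : ∀ i, v i = 0 ∨ v i = ![1, -1, -1, 1] i)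
    (hker : v 0 + n * v 1 + (n ^ 2 - n) * v 2 + (n ^ 2 - 1) * v 3 = 0) :
    v = 0 ∨ v = ![1, -1, -1, 1] := by
  have hv0 := hv 0; have hv1 := hv 1; have hv2 := hv 2; have hv3 := hv 3
  simp only [Fin.isValue, Matrix.cons_val] at hv0 hv1 hv2 hv3
  rcases hv0 with h0 | h0 <;> rcases hv1 with h1 | h1 <;> rcases hv2 with h2 | h2 <;>
    rcases hv3 with h3 | h3 <;> rw [h0, h1, h2, h3] at hker
  case inl.inl.inl.inl => exact .inl (by ext i; fin_cases i <;> simp [h0, h1, h2, h3])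
  case inr.inr.inr.inr => exact .inr (by ext i; fin_cases i <;> simp [h0, h1, h2, h3])
  all_goals nlinarith

theorem stmt_19 (n : ℕ) (hn : 2 ≤ n) :
    ¬ ∃ v w : Fin 4 → ℤ,
      (v 0 + n * v 1 + ((n : ℤ) ^ 2 - n) * v 2 + ((n : ℤ) ^ 2 - 1) * v 3 = 0) ∧
      (w 0 + n * w 1 + ((n : ℤ) ^ 2 - n) * w 2 + ((n : ℤ) ^ 2 - 1) * w 3 = 0) ∧
      v ≠ 0 ∧ w ≠ 0 ∧
      (![1, -1, -1, 1] : Fin 4 → ℤ) = v + w ∧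
      (∀ i, max ((![1, -1, -1, 1] : Fin 4 → ℤ) i) 0 = max (v i) 0 + max (w i) 0) ∧
      (∀ i, max (-((![1, -1, -1, 1] : Fin 4 → ℤ) i)) 0
        = max (-(v i)) 0 + max (-(w i)) 0) := by
  rintro ⟨v, w, hv, -, hv0, hw0, hvw, -, hneg⟩
  have hcoord : ∀ i, v i = 0 ∨ v i = ![1, -1, -1, 1] i := fun i =>
    eq_zero_or_eq_of_conformal (by fin_cases i <;> simp) (congrFun hvw i) (hneg i)
  rcases eq_zero_or_eq_of_mem_kernel (by exact_mod_cast hn) hcoord hv with rfl | rfl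
  · exact hv0 rfl
  · exact hw0 (left_eq_add.mp hvw)
end
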